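/- For all integers q ≥ 3 and n ≥ 1: the sum, over all integer triples (a,k,i) with 0 ≤ a ≤ k ≤ i ≤ n+a−k, of C(n,a) · (q−2)^a · (C(n−a, k−a) − C(n−a, k−a−1)) equals q^n. -/

import Mathlib

/-!
For fixed `a`, put `m = n - a`. The admissible `k` form the interval `a ≤ k ≤ min i (n + a - i)`,
over which the differences `C(m, k-a) - C(m, k-a-1)` telescope to `C(m, min (i-a) (n-i))`,
which is `C(m, i-a)` by symmetry. Summing over `i` gives `2^m`, and
`∑ₐ C(n,a) (q-2)^a 2^(n-a) = q^n` is the binomial theorem.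
-/

/-- Integer binomial coefficient `C(a,b)`, equal to `0` whenever `b < 0` or `b > a`. -/
def zchoose (a b : ℤ) : ℤ :=
  if 0 ≤ b ∧ b ≤ a then ((a.toNat).choose b.toNat : ℤ) else 0

open Finset

lemma zchoose_natCast (m j : ℕ) : zchoose m j = m.choose j := by
  unfold zchoose
  split_ifs with h
  · simp
  · rw [Nat.choose_eq_zero_of_lt (by omega)]; rfl

lemma zchoose_of_neg (m : ℤ) {b : ℤ} (hb : b < 0) : zchoose m b = 0 :=
  if_neg fun h => by omega

lemma zchoose_of_lt (m : ℤ) {b : ℤ} (hb : m < b) : zchoose m b = 0 :=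
  if_neg fun h => by omega

lemma zchoose_sub_symm (m b : ℤ) : zchoose m (m - b) = zchoose m b := by
  rcases lt_or_ge b 0 with hb | hb
  · rw [zchoose_of_neg m hb, zchoose_of_lt m (by omega)]
  rcases lt_or_ge m b with hmb | hmb
  · rw [zchoose_of_lt m hmb, zchoose_of_neg m (by omega)]
  lift b to ℕ using hb
  lift m to ℕ using by omega
  rw [← Nat.cast_sub (by omega), zchoose_natCast, zchoose_natCast,
    Nat.choose_symm (by omega)]

lemma zchoose_min_sub (m b : ℤ) : zchoose m (min b (m - b)) = zchoose m b := by
  rcases min_cases b (m - b) with ⟨h, -⟩ | ⟨h, -⟩ <;> rw [h]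
  exact zchoose_sub_symm m b

lemma sum_Icc_zchoose_sub (m : ℤ) {a t : ℕ} (h : a ≤ t + 1) :
    ∑ k ∈ Icc a t, (zchoose m (k - a) - zchoose m (k - a - 1)) = zchoose m (t - a) := by
  have := sum_Ico_sub (fun k : ℕ => zchoose m (k - a - 1)) h
  have shift (x : ℤ) : x + 1 - a - 1 = x - a := by ring
  simp only [Nat.cast_add, Nat.cast_one, shift, sub_self] at this
  rw [← Ico_add_one_right_eq_Icc, this, zchoose_of_neg m (b := 0 - 1) (by norm_num), sub_zero]

lemma sum_range_zchoose_sub (n a : ℕ) (ha : a ≤ n) :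
    ∑ i ∈ range (n + 1), zchoose (n - a) (i - a) = 2 ^ (n - a) := by
  obtain ⟨m, rfl⟩ := Nat.exists_eq_add_of_le ha
  rw [show a + m + 1 = a + (m + 1) by ring, sum_range_add,
    sum_eq_zero fun i hi => zchoose_of_neg _ (by rw [mem_range] at hi; omega), zero_add]
  simp only [Nat.cast_add, add_sub_cancel_left, zchoose_natCast, Nat.add_sub_cancel_left]
  exact_mod_cast Nat.sum_range_choose m

lemma sum_filter_zchoose_sub {n a i : ℕ} (hi : i ≤ n) :
    ∑ k ∈ (range (n + 1)).filter (fun k => a ≤ k ∧ k ≤ i ∧ i + k ≤ n + a),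
      (zchoose ((n : ℤ) - a) ((k : ℤ) - a) - zchoose ((n : ℤ) - a) ((k : ℤ) - a - 1))
      = zchoose ((n : ℤ) - a) ((i : ℤ) - a) := by
  have hfilter : (range (n + 1)).filter (fun k => a ≤ k ∧ k ≤ i ∧ i + k ≤ n + a)
      = Icc a (min i (n + a - i)) := by
    ext k
    simp only [mem_filter, mem_range, mem_Icc, le_min_iff]
    omega
  rw [hfilter]
  rcases lt_or_ge i a with hia | hai
  · rw [Icc_eq_empty (by omega), sum_empty, zchoose_of_neg _ (by omega)]
  rw [sum_Icc_zchoose_sub _ (by omega), ← zchoose_min_sub _ ((i : ℤ) - a)]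
  congr 1
  omega

theorem statement16_general (q n : ℕ) :
    (∑ z ∈ (Finset.range (n + 1) ×ˢ Finset.range (n + 1) ×ˢ Finset.range (n + 1)).filter
        (fun z : ℕ × ℕ × ℕ => z.1 ≤ z.2.1 ∧ z.2.1 ≤ z.2.2 ∧ z.2.2 + z.2.1 ≤ n + z.1),
      (n.choose z.1 : ℤ) * ((q : ℤ) - 2) ^ z.1 *
        (zchoose ((n : ℤ) - z.1) ((z.2.1 : ℤ) - z.1)
          - zchoose ((n : ℤ) - z.1) ((z.2.1 : ℤ) - z.1 - 1)))
      = (q : ℤ) ^ n := by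
  rw [sum_filter, sum_product]
  simp_rw [sum_product_right, ← sum_filter, ← mul_sum]
  calc ∑ a ∈ range (n + 1), (n.choose a : ℤ) * ((q : ℤ) - 2) ^ a * _
      = ∑ a ∈ range (n + 1), (n.choose a : ℤ) * ((q : ℤ) - 2) ^ a * 2 ^ (n - a) := by
        refine sum_congr rfl fun a ha => ?_
        rw [sum_congr rfl fun i hi => sum_filter_zchoose_sub (mem_range_succ_iff.mp hi),
          sum_range_zchoose_sub n a (mem_range_succ_iff.mp ha)]
    _ = (q : ℤ) ^ n := by
        conv_rhs => rw [← sub_add_cancel (q : ℤ) 2, add_pow]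
        exact sum_congr rfl fun a _ => by ring

/-- for `q ≥ 3` and `n ≥ 1`, the sum over all integer triples `(a,k,i)` with
`0 ≤ a ≤ k ≤ i ≤ n+a−k` of `C(n,a)·(q−2)^a·(C(n−a,k−a) − C(n−a,k−a−1))` equals `q^n`.
(All such triples satisfy `a,k,i ≤ n`, so ranging over `{0,…,n}³` is no restriction.) -/
theorem statement16 (q n : ℕ) (hq : 3 ≤ q) (hn : 1 ≤ n) :
    (∑ z ∈ (Finset.range (n + 1) ×ˢ Finset.range (n + 1) ×ˢ Finset.range (n + 1)).filter
        (fun z : ℕ × ℕ × ℕ => z.1 ≤ z.2.1 ∧ z.2.1 ≤ z.2.2 ∧ z.2.2 + z.2.1 ≤ n + z.1),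
      (n.choose z.1 : ℤ) * ((q : ℤ) - 2) ^ z.1 *
        (zchoose ((n : ℤ) - z.1) ((z.2.1 : ℤ) - z.1)
          - zchoose ((n : ℤ) - z.1) ((z.2.1 : ℤ) - z.1 - 1)))
      = (q : ℤ) ^ n :=
  statement16_general q n
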